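/- arXiv:1007.0189 — 3 statements merged into one kernel-verified Lean document; each statement's English description precedes it below -/
import Mathlib

section
/- Let (X,T) be a dynamical system on a compact metric space and d ≥ 1 an integer. Then the proximal relation P(X) is contained in the regionally proximal relation of order d, RP^[d](X). -/
/-- The regionally proximal relation of order `d`. -/
def RP {X : Type*} [MetricSpace X] (T : X ≃ₜ X) (d : ℕ) : Set (X × X) :=
  {p | ∀ δ > (0 : ℝ), ∃ x' y' : X, ∃ n : Fin d → ℤ,
    dist p.1 x' < δ ∧ dist p.2 y' < δ ∧
    ∀ ε : Fin d → Bool, ε ≠ (fun _ => false) →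
      dist ((T.toEquiv ^ (∑ i, if ε i then n i else 0)) x')
           ((T.toEquiv ^ (∑ i, if ε i then n i else 0)) y') < δ}

/-- The proximal relation. -/
def ProximalRel {X : Type*} [MetricSpace X] (T : X ≃ₜ X) : Set (X × X) :=
  {p | ∀ δ > (0 : ℝ), ∃ n : ℤ, dist ((T.toEquiv ^ n) p.1) ((T.toEquiv ^ n) p.2) < δ}

/-!
Choose `n₁, …, n_d` one at a time. If every nonempty subset sum of `n₁, …, n_k` brings `x` and `y`
`δ`-close, the finitely many maps `T^s`, `s` a subset sum (including `s = 0`), are uniformly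
equicontinuous on the compact space `X`; proximality yields `n_{k+1}` with `T^{n_{k+1}} x` and
`T^{n_{k+1}} y` so close that every `T^s` keeps them `δ`-close, which handles the new subset sums.
-/

section

variable {X : Type*}

namespace Homeomorph

def toPerm [TopologicalSpace X] : (X ≃ₜ X) →* Equiv.Perm X where
  toFun := Homeomorph.toEquiv
  map_one' := rfl
  map_mul' _ _ := rfl

theorem continuous_toEquiv_zpow [TopologicalSpace X] (T : X ≃ₜ X) (s : ℤ) :
    Continuous (T.toEquiv ^ s) := by
  rw [show T.toEquiv ^ s = (T ^ s).toEquiv from (map_zpow toPerm T s).symm]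
  exact (T ^ s).continuous

end Homeomorph

/-- The exponent `n · ε` at the vertex `ε` of the cube spanned by `n`. -/
def cubeSum {k : ℕ} (n : Fin k → ℤ) (ε : Fin k → Bool) : ℤ :=
  ∑ i, if ε i then n i else 0

theorem cubeSum_snoc_snoc {k : ℕ} (n : Fin k → ℤ) (m : ℤ) (ε : Fin k → Bool) (b : Bool) :
    cubeSum (Fin.snoc n m : Fin (k + 1) → ℤ) (Fin.snoc ε b) =
      cubeSum n ε + if b then m else 0 := by
  simp only [cubeSum, Fin.sum_univ_castSucc, Fin.snoc_castSucc, Fin.snoc_last]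

theorem exists_dist_zpow_cubeSum_lt_of_mem_proximalRel [MetricSpace X] [CompactSpace X]
    {T : X ≃ₜ X} {p : X × X} (hp : p ∈ ProximalRel T) (k : ℕ) {δ : ℝ} (hδ : 0 < δ) :
    ∃ n : Fin k → ℤ, ∀ ε : Fin k → Bool, ε ≠ (fun _ => false) →
      dist ((T.toEquiv ^ cubeSum n ε) p.1) ((T.toEquiv ^ cubeSum n ε) p.2) < δ := by
  induction k with
  | zero => exact ⟨Fin.elim0, fun ε hε => absurd (Subsingleton.elim _ _) hε⟩
  | succ k ih =>
    obtain ⟨n, hn⟩ := ih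
    have hequi : UniformEquicontinuous fun ε : Fin k → Bool => ⇑(T.toEquiv ^ cubeSum n ε) :=
      uniformEquicontinuous_finite.2 fun ε =>
        CompactSpace.uniformContinuous_of_continuous (T.continuous_toEquiv_zpow _)
    obtain ⟨η, hη, hclose⟩ := Metric.uniformEquicontinuous_iff.1 hequi δ hδ
    obtain ⟨m, hm⟩ := hp η hη
    refine ⟨Fin.snoc n m, fun ε hε => ?_⟩
    obtain ⟨ε, b, rfl⟩ : ∃ ε' b, ε = Fin.snoc ε' b :=
      ⟨Fin.init ε, ε (Fin.last k), (Fin.snoc_init_self ε).symm⟩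
    rw [cubeSum_snoc_snoc]
    cases b with
    | false =>
      rw [if_neg Bool.false_ne_true, add_zero]
      refine hn ε fun h => hε ?_
      rw [h]
      exact funext fun i => by cases i using Fin.lastCases <;> simp
    | true =>
      simpa only [if_true, zpow_add, Equiv.Perm.mul_apply] using hclose _ _ hm ε

end

theorem proximal_subset_RP_general {X : Type*} [MetricSpace X] [CompactSpace X]
    (T : X ≃ₜ X) (d : ℕ) :
    ProximalRel T ⊆ RP T d := by
  intro p hp δ hδ
  obtain ⟨n, hn⟩ := exists_dist_zpow_cubeSum_lt_of_mem_proximalRel hp d hδ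
  exact ⟨p.1, p.2, n, by rwa [dist_self], by rwa [dist_self], hn⟩

theorem proximal_subset_RP {X : Type*} [MetricSpace X] [CompactSpace X]
    (T : X ≃ₜ X) (d : ℕ) (hd : 1 ≤ d) :
    ProximalRel T ⊆ RP T d :=
  proximal_subset_RP_general T d
end

section
/- Let (X,T) be a minimal dynamical system and d ≥ 1. Assume: (a) for every x ∈ X, the orbit closure of x^[d+1] = (x,...,x) under the face group F^[d+1] is an F^[d+1]-minimal set; and (b) for every x, it is the unique F^[d+1]-minimal subset of Q^[d+1][x] = {z ∈ Q^[d+1](X) : z_∅ = x}; and (c) (x,y) ∈ RP^[d](X) iff (x, y, ..., y) (x in first coordinate, y elsewhere) lies in the F^[d+1]-orbit closure of x^[d+1]. Then RP^[d](X) is transitive: (x,y) ∈ RP^[d] and (y,z) ∈ RP^[d] imply (x,z) ∈ RP^[d]. -/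
/-- The dynamical parallelepiped set `Q^[d](X)`. -/
def Qcube {X : Type*} [TopologicalSpace X] (T : X ≃ₜ X) (d : ℕ) :
    Set ((Fin d → Bool) → X) :=
  closure {y | ∃ (x : X) (n : Fin d → ℤ),
    y = fun ε => (T.toEquiv ^ (∑ i, if ε i then n i else 0)) x}

/-- The `j`-th face transformation of the cube space `X^{2^d}`. -/
def faceEquiv {X : Type*} (T : X ≃ X) (d : ℕ) (j : Fin d) :
    Equiv.Perm ((Fin d → Bool) → X) :=
  Equiv.piCongrRight (fun ε : Fin d → Bool => if ε j then T else Equiv.refl X)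

/-- The face group `F^[d]`: the group generated by the face transformations. -/
def faceGroup {X : Type*} (T : X ≃ X) (d : ℕ) :
    Subgroup (Equiv.Perm ((Fin d → Bool) → X)) :=
  Subgroup.closure {g | ∃ j : Fin d, g = faceEquiv T d j}

/-- The orbit closure of a point of the cube space under the face group. -/
def faceOrbitClosure {X : Type*} [TopologicalSpace X] (T : X ≃ₜ X) (d : ℕ)
    (z : (Fin d → Bool) → X) : Set ((Fin d → Bool) → X) :=
  closure {w | ∃ g ∈ faceGroup T.toEquiv d, w = g z}

/-- `M` is a minimal set for the action of the face group `F^[d]`. -/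
def FaceMinimal {X : Type*} [TopologicalSpace X] (T : X ≃ₜ X) (d : ℕ)
    (M : Set ((Fin d → Bool) → X)) : Prop :=
  M.Nonempty ∧ IsClosed M ∧ (∀ g ∈ faceGroup T.toEquiv d, ∀ w ∈ M, g w ∈ M) ∧
  ∀ M' ⊆ M, M'.Nonempty → IsClosed M' →
    (∀ g ∈ faceGroup T.toEquiv d, ∀ w ∈ M', g w ∈ M') → M' = M

/-
If `(x, y), (y, z) ∈ RP^[d]`, then by (c) the cube `(x, y, …, y)` lies in the face orbit closure of
`x^[d+1]` and `(y, z, …, z)` in that of `y^[d+1]`. Face transformations never move the `∅`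
coordinate, so overwriting that coordinate by `x` commutes with the face group and carries the
orbit closure of `y^[d+1]` into that of `(x, y, …, y)`. Hence `(x, z, …, z)` lies in the orbit
closure of `(x, y, …, y)`, which is contained in that of `x^[d+1]`, and (c) gives `(x, z) ∈ RP^[d]`.
-/

open Function

lemma Homeomorph.continuous_toEquiv_zpow_s14 {X : Type*} [TopologicalSpace X] (T : X ≃ₜ X)
    (n : ℤ) : Continuous ⇑(T.toEquiv ^ n) := by
  have h : (T ^ n).toEquiv = T.toEquiv ^ n :=
    map_zpow (MonoidHom.mk' (fun f : X ≃ₜ X => (f.toEquiv : Equiv.Perm X)) fun _ _ => rfl) T n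
  exact h ▸ (T ^ n).continuous

section FaceGroup

variable {X : Type*} {d : ℕ}

lemma exists_zpow_of_mem_faceGroup {T : X ≃ X} {g : Equiv.Perm ((Fin d → Bool) → X)}
    (hg : g ∈ faceGroup T d) :
    ∃ c : (Fin d → Bool) → ℤ, c (fun _ => false) = 0 ∧ ∀ w ε, g w ε = (T ^ c ε) (w ε) := by
  induction hg using Subgroup.closure_induction with
  | mem g hg =>
      obtain ⟨j, rfl⟩ := hg
      refine ⟨fun ε => if ε j then 1 else 0, by simp, fun w ε => ?_⟩
      by_cases h : ε j <;> simp [faceEquiv, h, Equiv.piCongrRight]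
  | one => exact ⟨0, rfl, by simp⟩
  | mul g h _ _ ihg ihh =>
      obtain ⟨c, hc0, hc⟩ := ihg
      obtain ⟨e, he0, he⟩ := ihh
      refine ⟨c + e, by simp [hc0, he0], fun w ε => ?_⟩
      rw [Equiv.Perm.mul_apply, hc, he, ← Equiv.Perm.mul_apply, ← zpow_add, Pi.add_apply]
  | inv g _ ih =>
      obtain ⟨c, hc0, hc⟩ := ih
      refine ⟨-c, by simp [hc0], fun w ε => ?_⟩
      have hw : g (fun ε => (T ^ (-c ε)) (w ε)) = w := by
        funext ε
        rw [hc, ← Equiv.Perm.mul_apply, ← zpow_add, add_neg_cancel, zpow_zero,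
          Equiv.Perm.one_apply]
      conv_lhs => rw [← hw]
      simp

lemma faceGroup_apply_update_empty {T : X ≃ X} {g : Equiv.Perm ((Fin d → Bool) → X)}
    (hg : g ∈ faceGroup T d) (w : (Fin d → Bool) → X) (x : X) :
    g (update w (fun _ => false) x) = update (g w) (fun _ => false) x := by
  obtain ⟨c, hc0, hc⟩ := exists_zpow_of_mem_faceGroup hg
  funext ε
  rcases eq_or_ne ε (fun _ => false) with rfl | hε
  · simp [hc, hc0]
  · simp [hc, hε]

variable [TopologicalSpace X] {T : X ≃ₜ X}

lemma continuous_of_mem_faceGroup {g : Equiv.Perm ((Fin d → Bool) → X)}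
    (hg : g ∈ faceGroup T.toEquiv d) : Continuous g := by
  obtain ⟨c, -, hc⟩ := exists_zpow_of_mem_faceGroup hg
  rw [show ⇑g = fun w ε => (T.toEquiv ^ c ε) (w ε) from funext fun w => funext (hc w)]
  exact continuous_pi fun ε => (T.continuous_toEquiv_zpow_s14 (c ε)).comp (continuous_apply ε)

lemma faceGroup_apply_mem_faceOrbitClosure {g : Equiv.Perm ((Fin d → Bool) → X)}
    (hg : g ∈ faceGroup T.toEquiv d) {z w : (Fin d → Bool) → X}
    (hw : w ∈ faceOrbitClosure T d z) : g w ∈ faceOrbitClosure T d z := by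
  refine map_mem_closure (continuous_of_mem_faceGroup hg) hw ?_
  rintro _ ⟨h, hh, rfl⟩
  exact ⟨g * h, mul_mem hg hh, rfl⟩

lemma faceOrbitClosure_subset_of_mem {z w : (Fin d → Bool) → X}
    (hw : w ∈ faceOrbitClosure T d z) : faceOrbitClosure T d w ⊆ faceOrbitClosure T d z :=
  closure_minimal (by rintro _ ⟨g, hg, rfl⟩; exact faceGroup_apply_mem_faceOrbitClosure hg hw)
    isClosed_closure

lemma update_empty_mem_faceOrbitClosure {z w : (Fin d → Bool) → X}
    (hw : w ∈ faceOrbitClosure T d z) (x : X) :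
    update w (fun _ => false) x ∈ faceOrbitClosure T d (update z (fun _ => false) x) := by
  refine map_mem_closure (f := fun w => update w (fun _ => false) x) (by fun_prop) hw ?_
  rintro _ ⟨g, hg, rfl⟩
  exact ⟨g, hg, (faceGroup_apply_update_empty hg z x).symm⟩

end FaceGroup

theorem RP_transitive_general {X : Type*} [MetricSpace X]
    (T : X ≃ₜ X)
    (d : ℕ)
    (hc : ∀ x y : X, (x, y) ∈ RP T d ↔
      (fun ε : Fin (d + 1) → Bool => if ε = (fun _ => false) then x else y) ∈
        faceOrbitClosure T (d + 1) (fun _ => x)) :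
    ∀ x y z : X, (x, y) ∈ RP T d → (y, z) ∈ RP T d → (x, z) ∈ RP T d := by
  have corner (a b : X) :
      (fun ε : Fin (d + 1) → Bool => if ε = (fun _ => false) then a else b) =
        update (fun _ => b) (fun _ => false) a :=
    funext fun ε => by rw [update_apply]
  intro x y z hxy hyz
  rw [hc, corner] at hxy hyz ⊢
  have hxz := update_empty_mem_faceOrbitClosure hyz x
  rw [update_idem] at hxz
  exact faceOrbitClosure_subset_of_mem hxy hxz

theorem RP_transitive {X : Type*} [MetricSpace X] [CompactSpace X]
    (T : X ≃ₜ X)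
    (hmin : ∀ x : X, Dense {y : X | ∃ n : ℤ, y = (T.toEquiv ^ n) x})
    (d : ℕ) (hd : 1 ≤ d)
    (ha : ∀ x : X, FaceMinimal T (d + 1)
      (faceOrbitClosure T (d + 1) (fun _ => x)))
    (hb : ∀ x : X, ∀ M : Set ((Fin (d + 1) → Bool) → X),
      M ⊆ {z ∈ Qcube T (d + 1) | z (fun _ => false) = x} →
      FaceMinimal T (d + 1) M →
      M = faceOrbitClosure T (d + 1) (fun _ => x))
    (hc : ∀ x y : X, (x, y) ∈ RP T d ↔
      (fun ε : Fin (d + 1) → Bool => if ε = (fun _ => false) then x else y) ∈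
        faceOrbitClosure T (d + 1) (fun _ => x)) :
    ∀ x y z : X, (x, y) ∈ RP T d → (y, z) ∈ RP T d → (x, z) ∈ RP T d :=
  RP_transitive_general T d hc
end

section
/- Let π : (X,T) → (Y,T) be an extension of minimal systems on compact metric spaces. If (y₁,y₂) is a proximal pair in Y and x₁ ∈ π⁻¹(y₁), then there exists x₂ ∈ π⁻¹(y₂) such that (x₁,x₂) is a proximal pair in X. -/
/-- Proximality for the ℤ-system generated by a homeomorphism of a metric space. -/
def Proximal {X : Type*} [MetricSpace X] (T : X ≃ₜ X) (a b : X) : Prop :=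
  ∀ δ > (0 : ℝ), ∃ n : ℤ, dist ((T.toEquiv ^ n) a) ((T.toEquiv ^ n) b) < δ

/-!
Work in the joint enveloping semigroup `E`: the closure of `{(Tⁿ, Sⁿ) : n ∈ ℤ}` in
`X^X × Y^Y`, a compact semigroup whose right multiplications are continuous and whose
`Y`-components are exactly the enveloping semigroup of `S`. Proximality of `(y₁, y₂)` gives
`r ∈ E` with `r y₁ = r y₂`, and minimality of `Y` gives `l ∈ E` with `l (r y₂) = y₂`.
So `{u ∈ E | u y₁ = y₂, u y₂ = y₂}` is a nonempty compact subsemigroup, hence contains an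
idempotent `u` (Ellis–Numakura). Then `x₂ := u x₁` lies over `u y₁ = y₂`, and `u x₁ = u x₂`
makes `(x₁, x₂)` proximal.
-/

open Set Function

namespace Function.End

variable {α : Type*} [TopologicalSpace α]

instance : TopologicalSpace (Function.End α) := Pi.topologicalSpace

instance [T2Space α] : T2Space (Function.End α) := inferInstanceAs (T2Space (α → α))

instance [CompactSpace α] : CompactSpace (Function.End α) :=
  inferInstanceAs (CompactSpace (α → α))

theorem continuous_apply (x : α) : Continuous fun p : Function.End α => p x :=
  _root_.continuous_apply x

theorem continuous_mul_right (r : Function.End α) : Continuous fun p : Function.End α => p * r :=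
  continuous_pi fun x => continuous_apply (r x)

theorem continuous_mul_left {f : Function.End α} (hf : Continuous f) :
    Continuous fun p : Function.End α => f * p :=
  continuous_pi fun x => hf.comp (continuous_apply x)

end Function.End

theorem mul_mem_closure_of_mul_mem {M : Type*} [Mul M] [TopologicalSpace M] {s : Set M}
    (hright : ∀ r : M, Continuous (· * r)) (hleft : ∀ a ∈ s, Continuous (a * ·))
    (hs : ∀ a ∈ s, ∀ b ∈ s, a * b ∈ s) {a b : M} (ha : a ∈ closure s) (hb : b ∈ closure s) :
    a * b ∈ closure s := by
  have hleft_closure : ∀ a ∈ s, a * b ∈ closure s := fun a ha' =>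
    map_mem_closure (hleft a ha') hb fun b' hb' => hs a ha' b' hb'
  exact (MapsTo.closure_left hleft_closure (hright b) isClosed_closure) ha

section Homeomorph

variable {X Y : Type*} [TopologicalSpace X] [TopologicalSpace Y]

theorem Homeomorph.toEquiv_zpow (T : X ≃ₜ X) (n : ℤ) : T.toEquiv ^ n = (T ^ n).toEquiv :=
  (map_zpow ({ toFun := Homeomorph.toEquiv, map_one' := rfl, map_mul' := fun _ _ => rfl } :
    (X ≃ₜ X) →* Equiv.Perm X) T n).symm

theorem Function.Semiconj.homeomorph_zpow {π : X → Y} {T : X ≃ₜ X} {S : Y ≃ₜ Y}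
    (h : Semiconj π T S) (n : ℤ) : Semiconj π ⇑(T ^ n) ⇑(S ^ n) := by
  induction n using Int.induction_on with
  | zero => exact Semiconj.id_right
  | succ n ih => rw [zpow_add_one, zpow_add_one]; exact ih.comp_right h
  | pred n ih =>
    rw [zpow_sub_one, zpow_sub_one]
    exact ih.comp_right (h.inverses_right T.apply_symm_apply S.symm_apply_apply)

end Homeomorph

section Envelope

variable {X Y : Type*} [TopologicalSpace X] [TopologicalSpace Y]

def envelope (T : X ≃ₜ X) : Set (Function.End X) :=
  closure (range fun n : ℤ => ⇑(T ^ n))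

def jointEnvelope (T : X ≃ₜ X) (S : Y ≃ₜ Y) : Set (Function.End X × Function.End Y) :=
  closure (range fun n : ℤ => ((⇑(T ^ n) : Function.End X), (⇑(S ^ n) : Function.End Y)))

theorem continuous_mul_right_end_prod (r : Function.End X × Function.End Y) :
    Continuous (· * r) :=
  ((Function.End.continuous_mul_right r.1).comp continuous_fst).prodMk
    ((Function.End.continuous_mul_right r.2).comp continuous_snd)

theorem mul_mem_jointEnvelope {T : X ≃ₜ X} {S : Y ≃ₜ Y} {p q : Function.End X × Function.End Y}
    (hp : p ∈ jointEnvelope T S) (hq : q ∈ jointEnvelope T S) : p * q ∈ jointEnvelope T S := by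
  refine mul_mem_closure_of_mul_mem continuous_mul_right_end_prod ?_ ?_ hp hq
  · rintro _ ⟨n, rfl⟩
    exact ((Function.End.continuous_mul_left (T ^ n).continuous).comp continuous_fst).prodMk
      ((Function.End.continuous_mul_left (S ^ n).continuous).comp continuous_snd)
  · rintro _ ⟨n, rfl⟩ _ ⟨m, rfl⟩
    exact ⟨n + m, by simp only [zpow_add]; rfl⟩

theorem image_fst_jointEnvelope [CompactSpace X] [CompactSpace Y] [T2Space X]
    (T : X ≃ₜ X) (S : Y ≃ₜ Y) : Prod.fst '' jointEnvelope T S = envelope T := by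
  rw [jointEnvelope, image_closure_of_isCompact isClosed_closure.isCompact
    continuous_fst.continuousOn, ← range_comp]
  rfl

theorem image_snd_jointEnvelope [CompactSpace X] [CompactSpace Y] [T2Space Y]
    (T : X ≃ₜ X) (S : Y ≃ₜ Y) : Prod.snd '' jointEnvelope T S = envelope S := by
  rw [jointEnvelope, image_closure_of_isCompact isClosed_closure.isCompact
    continuous_snd.continuousOn, ← range_comp]
  rfl

theorem semiconj_of_mem_jointEnvelope [T2Space Y] {T : X ≃ₜ X} {S : Y ≃ₜ Y} {π : X → Y}
    (hπ : Continuous π) (hcomm : Semiconj π T S) {p : Function.End X × Function.End Y}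
    (hp : p ∈ jointEnvelope T S) : Semiconj π p.1 p.2 := by
  have hclosed : IsClosed {p : Function.End X × Function.End Y | Semiconj π p.1 p.2} := by
    simp only [Semiconj, ofPred_forall]
    exact isClosed_iInter fun x => isClosed_eq
      (hπ.comp ((Function.End.continuous_apply x).comp continuous_fst))
      ((Function.End.continuous_apply (π x)).comp continuous_snd)
  refine closure_minimal ?_ hclosed hp
  rintro _ ⟨n, rfl⟩
  exact hcomm.homeomorph_zpow n

theorem exists_mem_envelope_apply_eq_of_dense_orbit [CompactSpace X] [T2Space X] {T : X ≃ₜ X}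
    {x : X} (hx : Dense {x' : X | ∃ n : ℤ, x' = (T.toEquiv ^ n) x}) (x' : X) :
    ∃ p ∈ envelope T, p x = x' := by
  have horbit : {x' : X | ∃ n : ℤ, x' = (T.toEquiv ^ n) x} = range fun n : ℤ => (T ^ n) x := by
    ext
    simp only [Homeomorph.toEquiv_zpow, eq_comm, mem_ofPred_eq, mem_range]
    rfl
  have himage : (fun p : Function.End X => p x) '' envelope T = univ := by
    rw [envelope, image_closure_of_isCompact isClosed_closure.isCompact
      (Function.End.continuous_apply x).continuousOn, ← hx.closure_eq, horbit]
    exact congrArg closure (range_comp _ _).symm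
  exact (himage.symm ▸ mem_univ x' : x' ∈ (fun p : Function.End X => p x) '' envelope T)

end Envelope

section Proximal

variable {X : Type*} [MetricSpace X] {T : X ≃ₜ X}

theorem proximal_iff_zero_mem_closure {a b : X} :
    Proximal T a b ↔ (0 : ℝ) ∈ closure (range fun n : ℤ => dist ((T ^ n) a) ((T ^ n) b)) := by
  simp only [Metric.mem_closure_range_iff, dist_zero_left, Real.norm_eq_abs, abs_dist, Proximal,
    Homeomorph.toEquiv_zpow]
  rfl

theorem dist_image_envelope [CompactSpace X] (a b : X) :
    (fun p : Function.End X => dist (p a) (p b)) '' envelope T =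
      closure (range fun n : ℤ => dist ((T ^ n) a) ((T ^ n) b)) := by
  rw [envelope, image_closure_of_isCompact isClosed_closure.isCompact
    ((Function.End.continuous_apply a).dist (Function.End.continuous_apply b)).continuousOn]
  exact congrArg closure (range_comp _ _).symm

theorem proximal_of_mem_envelope {p : Function.End X} (hp : p ∈ envelope T) {a b : X}
    (h : p a = p b) : Proximal T a b := by
  rw [proximal_iff_zero_mem_closure]
  have hdist := map_mem_closure
    ((Function.End.continuous_apply a).dist (Function.End.continuous_apply b)) hp
    (t := range fun n : ℤ => dist ((T ^ n) a) ((T ^ n) b)) (by rintro _ ⟨n, rfl⟩; exact ⟨n, rfl⟩)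
  rwa [h, dist_self] at hdist

theorem Proximal.exists_mem_envelope_apply_eq [CompactSpace X] {a b : X} (h : Proximal T a b) :
    ∃ p ∈ envelope T, p a = p b := by
  rw [proximal_iff_zero_mem_closure, ← dist_image_envelope] at h
  obtain ⟨p, hp, hpab⟩ := h
  exact ⟨p, hp, dist_eq_zero.1 hpab⟩

end Proximal

theorem exists_idempotent_apply_eq_of_apply_eq {M Y : Type*} [Semigroup M] [TopologicalSpace M]
    [T2Space M] [TopologicalSpace Y] [T1Space Y] (hM : ∀ r : M, Continuous (· * r))
    (ρ : M →ₙ* Function.End Y) (hρ : ∀ y, Continuous fun p => ρ p y) {E : Set M}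
    (hE : IsCompact E) (hEmul : ∀ a ∈ E, ∀ b ∈ E, a * b ∈ E) {y₁ y₂ : Y} {r l : M}
    (hr : r ∈ E) (hr_eq : ρ r y₁ = ρ r y₂) (hl : l ∈ E) (hl_eq : ρ l (ρ r y₂) = y₂) :
    ∃ u ∈ E, u * u = u ∧ ρ u y₁ = y₂ ∧ ρ u y₂ = y₂ := by
  set G := E ∩ ({p | ρ p y₁ = y₂} ∩ {p | ρ p y₂ = y₂})
  have hG : IsCompact G := hE.inter_right <|
    (isClosed_singleton.preimage (hρ y₁)).inter (isClosed_singleton.preimage (hρ y₂))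
  have hlr : l * r ∈ G := by
    refine ⟨hEmul l hl r hr, ?_, ?_⟩ <;> simp only [mem_ofPred_eq, map_mul]
    · exact (congrArg (ρ l) hr_eq).trans hl_eq
    · exact hl_eq
  have hGmul : ∀ a ∈ G, ∀ b ∈ G, a * b ∈ G := by
    rintro a ⟨ha, ha₁, ha₂⟩ b ⟨hb, hb₁, hb₂⟩
    refine ⟨hEmul a ha b hb, ?_, ?_⟩ <;> simp only [mem_ofPred_eq, map_mul]
    · exact (congrArg (ρ a) hb₁).trans ha₂
    · exact (congrArg (ρ a) hb₂).trans ha₂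
  obtain ⟨u, ⟨hu, hu₁, hu₂⟩, hidem⟩ :=
    exists_idempotent_in_compact_subsemigroup hM G ⟨_, hlr⟩ hG hGmul
  exact ⟨u, hu, hidem, hu₁, hu₂⟩

theorem proximal_lifts_along_extension_general {X Y : Type*}
    [MetricSpace X] [CompactSpace X] [MetricSpace Y] [CompactSpace Y]
    (T : X ≃ₜ X) (S : Y ≃ₜ Y)
    (hminY : ∀ y : Y, Dense {y' : Y | ∃ n : ℤ, y' = (S.toEquiv ^ n) y})
    (π : X → Y) (hπ : Continuous π)
    (hcomm : ∀ x : X, π (T x) = S (π x))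
    (y₁ y₂ : Y) (hprox : Proximal S y₁ y₂)
    (x₁ : X) (hx₁ : π x₁ = y₁) :
    ∃ x₂ : X, π x₂ = y₂ ∧ Proximal T x₁ x₂ := by
  obtain ⟨r, hr, hr_eq⟩ := exists_mem_image.1 <|
    image_snd_jointEnvelope T S ▸ hprox.exists_mem_envelope_apply_eq
  obtain ⟨l, hl, hl_eq⟩ := exists_mem_image.1 <| image_snd_jointEnvelope T S ▸
    exists_mem_envelope_apply_eq_of_dense_orbit (hminY (r.2 y₂)) y₂
  obtain ⟨u, hu, hidem, hu₁, -⟩ := exists_idempotent_apply_eq_of_apply_eq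
    continuous_mul_right_end_prod (MulHom.snd _ _)
    (fun y => (Function.End.continuous_apply y).comp continuous_snd) isClosed_closure.isCompact
    (fun _ ha _ hb => mul_mem_jointEnvelope ha hb) hr hr_eq hl hl_eq
  refine ⟨u.1 x₁, ?_, ?_⟩
  · rw [semiconj_of_mem_jointEnvelope hπ hcomm hu, hx₁]
    exact hu₁
  · have hu_fst : u.1 ∈ envelope T := image_fst_jointEnvelope T S ▸ mem_image_of_mem _ hu
    exact proximal_of_mem_envelope hu_fst (congrArg (fun p => p.1 x₁) hidem).symm

theorem proximal_lifts_along_extension {X Y : Type*}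
    [MetricSpace X] [CompactSpace X] [MetricSpace Y] [CompactSpace Y]
    (T : X ≃ₜ X) (S : Y ≃ₜ Y)
    (hminX : ∀ x : X, Dense {x' : X | ∃ n : ℤ, x' = (T.toEquiv ^ n) x})
    (hminY : ∀ y : Y, Dense {y' : Y | ∃ n : ℤ, y' = (S.toEquiv ^ n) y})
    (π : X → Y) (hπ : Continuous π) (hsurj : Function.Surjective π)
    (hcomm : ∀ x : X, π (T x) = S (π x))
    (y₁ y₂ : Y) (hprox : Proximal S y₁ y₂)
    (x₁ : X) (hx₁ : π x₁ = y₁) :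
    ∃ x₂ : X, π x₂ = y₂ ∧ Proximal T x₁ x₂ :=
  proximal_lifts_along_extension_general T S hminY π hπ hcomm y₁ y₂ hprox x₁ hx₁
end
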